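/- Let a ∈ (0,1), b > 0, p₀ = a/(2b+1). If a - b > 1/2, then F(a,b;2b+1;t) < (1-t)^{p₀} F(a,b+1;2b+1;t) for all t ∈ (0,1); if a - b < 1/2, the reverse strict inequality holds; if a - b = 1/2 equality holds for all t ∈ (0,1). -/

import Mathlib

open Polynomial

/-- Pochhammer symbol `(a)_n` for real `a`. -/
noncomputable def poch (a : ℝ) (n : ℕ) : ℝ := (ascPochhammer ℝ n).eval a

/-- Gaussian hypergeometric function `F(a,b;c;z)`. -/
noncomputable def hypF (a b c z : ℝ) : ℝ :=
  ∑' n : ℕ, poch a n * poch b n / poch c n * z ^ n / n.factorial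

/-!
Write `u = F(a,b;2b+1;·)`, `v = F(a,b+1;2b+1;·)` and `c = 2b+1`. The contiguous relations
`t u' = b (v - u)` and `t (1-t) v' = (c-b-1) u + (b+1-c+a t) v` turn `r = u/v` into a solution of
the Riccati equation `t (1-t) r' = b (1-t) - (a-b) t r - b r²` with `r(0) = 1`. The comparison
function `φ = (1-t)^p₀` solves the same equation up to the error `b φ E(t)`, where
`E(t) = (2p₀-1) t - ((1-t)^(1-p₀) - (1-t)^p₀)`; after the substitution `1 - t = e^(-2w)` the sign of
`E` is that of `q sinh w - sinh (q w)` with `q = 2p₀ - 1`, i.e. the sign of `a - b - 1/2`.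
When `a ≥ b` the right-hand side is decreasing in `r`, so `r - φ` can only be nonnegative where it
decreases, and `r` stays on one side of `φ`; when `a < b` the same argument runs for `1/r` and
`1/φ`. For `a - b = 1/2` the error vanishes and `(r - φ)²` is nonincreasing, so `r = φ`.
-/

open Filter Topology Set

section PowerSeries

variable {f : ℕ → ℝ} (hf : ∀ n, f n ≠ 0) (hratio : Tendsto (fun n => f (n + 1) / f n) atTop (𝓝 1))
include hf hratio

theorem summable_norm_mul_pow_of_tendsto_ratio {r : ℝ} (hr₀ : 0 < r) (hr₁ : r < 1) :
    Summable fun n => ‖f n‖ * r ^ n := by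
  refine summable_of_ratio_test_tendsto_lt_one hr₁
    (Eventually.of_forall fun n => mul_ne_zero (norm_ne_zero_iff.2 (hf n)) (by positivity)) ?_
  have hlim := hratio.norm.mul_const r
  rw [norm_one, one_mul] at hlim
  refine hlim.congr fun n => ?_
  have hfn : ‖f n‖ ≠ 0 := norm_ne_zero_iff.2 (hf n)
  simp only [norm_div, norm_mul, norm_norm, norm_pow, Real.norm_of_nonneg hr₀.le]
  field_simp
  ring

theorem summable_mul_pow_of_tendsto_ratio {x : ℝ} (hx : |x| < 1) :
    Summable fun n => f n * x ^ n := by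
  obtain ⟨r, hxr, hr₁⟩ := exists_between hx
  refine (summable_norm_mul_pow_of_tendsto_ratio hf hratio ((abs_nonneg x).trans_lt hxr)
    hr₁).of_norm_bounded fun n => ?_
  rw [norm_mul, norm_pow, Real.norm_eq_abs x]
  gcongr

theorem tendsto_ratio_succ_mul_succ :
    Tendsto (fun n : ℕ => ((n + 1 : ℕ) + 1 : ℝ) * f (n + 1 + 1) / (((n : ℝ) + 1) * f (n + 1)))
      atTop (𝓝 1) := by
  have hlin : Tendsto (fun n : ℕ => ((2 : ℝ) + 1 * n) / (1 + 1 * n)) atTop (𝓝 (1 / 1)) :=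
    tendsto_add_mul_div_add_mul_atTop_nhds 2 1 1 one_ne_zero
  have hlim := hlin.mul (hratio.comp (tendsto_add_atTop_nat 1))
  rw [div_one, one_mul] at hlim
  refine hlim.congr fun n => ?_
  have hfn := hf (n + 1)
  simp only [Function.comp_apply]
  push_cast
  field_simp
  ring

theorem hasDerivAt_tsum_mul_pow {x : ℝ} (hx : |x| < 1) :
    HasDerivAt (fun y => ∑' n, f n * y ^ n) (∑' n : ℕ, ((n : ℝ) + 1) * f (n + 1) * x ^ n) x := by
  obtain ⟨ρ, hxρ, hρ₁⟩ := exists_between hx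
  have hx_mem : x ∈ Metric.ball (0 : ℝ) ρ := by rwa [mem_ball_zero_iff, Real.norm_eq_abs]
  have hu : Summable fun n : ℕ => (n : ℝ) * ‖f n‖ * ρ ^ (n - 1) := by
    refine (summable_nat_add_iff 1).1 ?_
    refine (summable_norm_mul_pow_of_tendsto_ratio
      (fun n => mul_ne_zero (Nat.cast_add_one_ne_zero n) (hf (n + 1)))
      (tendsto_ratio_succ_mul_succ hf hratio) ((abs_nonneg x).trans_lt hxρ) hρ₁).congr fun n => ?_
    rw [norm_mul, Real.norm_of_nonneg (by positivity : (0 : ℝ) ≤ n + 1)]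
    push_cast
    simp
  have hbound : ∀ n (y : ℝ), y ∈ Metric.ball (0 : ℝ) ρ →
      ‖f n * ((n : ℝ) * y ^ (n - 1))‖ ≤ (n : ℝ) * ‖f n‖ * ρ ^ (n - 1) := by
    intro n y hy
    rw [mem_ball_zero_iff] at hy
    rw [norm_mul, norm_mul, norm_pow, Real.norm_natCast]
    have : ‖y‖ ^ (n - 1) ≤ ρ ^ (n - 1) := by gcongr
    calc ‖f n‖ * (n * ‖y‖ ^ (n - 1)) ≤ ‖f n‖ * (n * ρ ^ (n - 1)) := by gcongr
      _ = _ := by ring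
  have hD := hasDerivAt_tsum_of_isPreconnected hu Metric.isOpen_ball
    (convex_ball (0 : ℝ) ρ).isPreconnected (fun n y _ => (hasDerivAt_pow n y).const_mul (f n))
    hbound hx_mem (summable_mul_pow_of_tendsto_ratio hf hratio hx) hx_mem
  refine hD.congr_deriv ?_
  rw [(hu.of_norm_bounded (hbound · x hx_mem)).tsum_eq_zero_add]
  simp only [CharP.cast_eq_zero, zero_mul, mul_zero, zero_add, Nat.add_sub_cancel]
  push_cast
  exact tsum_congr fun n => by ring

theorem hasSum_natCast_mul_mul_pow {x : ℝ} (hx : |x| < 1) :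
    HasSum (fun n : ℕ => (n : ℝ) * f n * x ^ n)
      (x * ∑' n : ℕ, ((n : ℝ) + 1) * f (n + 1) * x ^ n) := by
  have hD := ((summable_mul_pow_of_tendsto_ratio
    (fun n => mul_ne_zero (Nat.cast_add_one_ne_zero n) (hf (n + 1)))
    (tendsto_ratio_succ_mul_succ hf hratio) hx).hasSum).mul_left x
  rw [← hasSum_nat_add_iff' 1]
  simpa [pow_succ, mul_assoc, mul_comm, mul_left_comm] using hD

end PowerSeries

section Hypergeometric

variable {a b c x : ℝ}

theorem poch_succ (a : ℝ) (n : ℕ) : poch a (n + 1) = poch a n * (a + n) :=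
  ascPochhammer_succ_eval n a

theorem poch_succ_left (a : ℝ) (n : ℕ) : poch a (n + 1) = a * poch (a + 1) n := by
  simp [poch, ascPochhammer_succ_left, eval_comp]

theorem poch_pos (ha : 0 < a) (n : ℕ) : 0 < poch a n :=
  ascPochhammer_pos n a ha

noncomputable def hypCoeff (a b c : ℝ) (n : ℕ) : ℝ :=
  poch a n * poch b n / poch c n / n.factorial

theorem hypF_eq_tsum (a b c x : ℝ) : hypF a b c x = ∑' n, hypCoeff a b c n * x ^ n :=
  tsum_congr fun n => by rw [hypCoeff]; ring

theorem hypCoeff_zero (a b c : ℝ) : hypCoeff a b c 0 = 1 := by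
  simp [hypCoeff, poch]

theorem hypF_zero (a b c : ℝ) : hypF a b c 0 = 1 := by
  rw [hypF_eq_tsum, tsum_eq_single 0 fun n hn => by simp [hn]]
  simp [hypCoeff_zero]

theorem hypCoeff_pos (ha : 0 < a) (hb : 0 < b) (hc : 0 < c) (n : ℕ) : 0 < hypCoeff a b c n := by
  have := poch_pos ha n
  have := poch_pos hb n
  have := poch_pos hc n
  unfold hypCoeff
  positivity

theorem hypCoeff_succ (a b c : ℝ) (n : ℕ) :
    hypCoeff a b c (n + 1) = hypCoeff a b c n * (a + n) * (b + n) / ((c + n) * (n + 1)) := by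
  simp only [hypCoeff, poch_succ, Nat.factorial_succ, Nat.cast_mul, Nat.cast_succ, div_eq_mul_inv,
    mul_inv]
  ring

theorem succ_mul_hypCoeff_succ (a b c : ℝ) (n : ℕ) :
    ((n : ℝ) + 1) * hypCoeff a b c (n + 1) = a * b / c * hypCoeff (a + 1) (b + 1) (c + 1) n := by
  have : ((n : ℝ) + 1) ≠ 0 := Nat.cast_add_one_ne_zero n
  simp only [hypCoeff, poch_succ_left, Nat.factorial_succ, Nat.cast_mul, Nat.cast_succ,
    div_eq_mul_inv, mul_inv]
  field_simp

theorem mul_hypCoeff_add_one (a b c : ℝ) (n : ℕ) :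
    b * hypCoeff a (b + 1) c n = (b + n) * hypCoeff a b c n := by
  have : b * poch (b + 1) n = poch b n * (b + n) := by rw [← poch_succ_left, poch_succ]
  simp only [hypCoeff, div_eq_mul_inv]
  linear_combination poch a n * (poch c n)⁻¹ * ((n.factorial : ℝ))⁻¹ * this

theorem tendsto_hypCoeff_ratio (ha : 0 < a) (hb : 0 < b) (hc : 0 < c) :
    Tendsto (fun n => hypCoeff a b c (n + 1) / hypCoeff a b c n) atTop (𝓝 1) := by
  have hlim := (tendsto_add_mul_div_add_mul_atTop_nhds a c 1 one_ne_zero).mul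
    (tendsto_add_mul_div_add_mul_atTop_nhds b 1 1 one_ne_zero)
  rw [div_one, one_mul] at hlim
  refine hlim.congr fun n => ?_
  have := (hypCoeff_pos ha hb hc n).ne'
  rw [hypCoeff_succ]
  field_simp
  ring

variable (ha : 0 < a) (hb : 0 < b) (hc : 0 < c)
include ha hb hc

theorem hasSum_hypF (hx : |x| < 1) :
    HasSum (fun n => hypCoeff a b c n * x ^ n) (hypF a b c x) := by
  rw [hypF_eq_tsum]
  exact (summable_mul_pow_of_tendsto_ratio (fun n => (hypCoeff_pos ha hb hc n).ne')
    (tendsto_hypCoeff_ratio ha hb hc) hx).hasSum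

theorem hypF_pos (hx₀ : 0 ≤ x) (hx₁ : x < 1) : 0 < hypF a b c x := by
  rw [hypF_eq_tsum]
  refine (hasSum_hypF ha hb hc (x := x) (by rwa [abs_of_nonneg hx₀])).summable.tsum_pos
    (fun n => by have := hypCoeff_pos ha hb hc n; positivity) 0 (by simp [hypCoeff_zero])

theorem hasDerivAt_hypF (hx : |x| < 1) :
    HasDerivAt (hypF a b c) (a * b / c * hypF (a + 1) (b + 1) (c + 1) x) x := by
  have hD := hasDerivAt_tsum_mul_pow (fun n => (hypCoeff_pos ha hb hc n).ne')
    (tendsto_hypCoeff_ratio ha hb hc) hx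
  simp only [succ_mul_hypCoeff_succ, mul_assoc, tsum_mul_left, ← hypF_eq_tsum] at hD
  exact hD

theorem hasSum_natCast_mul_hypCoeff (hx : |x| < 1) :
    HasSum (fun n : ℕ => (n : ℝ) * hypCoeff a b c n * x ^ n)
      (x * (a * b / c * hypF (a + 1) (b + 1) (c + 1) x)) := by
  have hE := hasSum_natCast_mul_mul_pow (fun n => (hypCoeff_pos ha hb hc n).ne')
    (tendsto_hypCoeff_ratio ha hb hc) hx
  simpa only [succ_mul_hypCoeff_succ, mul_assoc, tsum_mul_left, ← hypF_eq_tsum] using hE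

end Hypergeometric

section Contiguous

variable {a b c x : ℝ}

theorem hypCoeff_contiguous_succ (hb : b ≠ 0) (hc : 0 < c) (n : ℕ) :
    ((n : ℝ) + c - b) * hypCoeff a (b + 1) c (n + 1) - (c - b - 1) * hypCoeff a b c (n + 1)
      = ((n : ℝ) + a) * hypCoeff a (b + 1) c n := by
  have hrec : hypCoeff a b c (n + 1) * ((c + n) * (n + 1))
      = hypCoeff a b c n * (a + n) * (b + n) := by
    rw [hypCoeff_succ, div_mul_cancel₀ _ (by positivity)]
  have e₀ := mul_hypCoeff_add_one a b c n
  have e₁ := mul_hypCoeff_add_one a b c (n + 1)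
  push_cast at e₁
  refine mul_left_cancel₀ hb ?_
  linear_combination ((n : ℝ) + c - b) * e₁ - ((n : ℝ) + a) * e₀ + hrec

variable (ha : 0 < a) (hb : 0 < b) (hc : 0 < c)
include ha hb hc

theorem hypF_contiguous (hx : |x| < 1) :
    x * (a * b / c * hypF (a + 1) (b + 1) (c + 1) x) = b * (hypF a (b + 1) c x - hypF a b c x) :=
  (hasSum_natCast_mul_hypCoeff ha hb hc hx).unique <|
    (((hasSum_hypF ha (by positivity) hc hx).sub (hasSum_hypF ha hb hc hx)).mul_left b).congr_fun
      fun n => by linear_combination -x ^ n * mul_hypCoeff_add_one a b c n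

theorem hypF_contiguous_succ (hx : |x| < 1) :
    x * (1 - x) * (a * (b + 1) / c * hypF (a + 1) (b + 1 + 1) (c + 1) x)
      = (c - b - 1) * hypF a b c x + (b + 1 - c + a * x) * hypF a (b + 1) c x := by
  have hb₁ : 0 < b + 1 := by positivity
  have hU := hasSum_hypF ha hb hc hx
  have hV := hasSum_hypF ha hb₁ hc hx
  have hE := hasSum_natCast_mul_hypCoeff ha hb₁ hc hx
  set h : ℕ → ℝ := fun n =>
    ((n : ℝ) + c - b - 1) * hypCoeff a (b + 1) c n - (c - b - 1) * hypCoeff a b c n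
  have hh := ((hE.add (hV.mul_left (c - b - 1))).sub (hU.mul_left (c - b - 1))).congr_fun
    fun n => show h n * x ^ n = _ by ring
  -- `h (n + 1) x ^ (n + 1)` is `x` times the `n`-th term of `x v' + a v`, and `h 0 = 0`
  have hh' : HasSum (fun n => h n * x ^ n) (x * (x * (a * (b + 1) / c *
      hypF (a + 1) (b + 1 + 1) (c + 1) x) + a * hypF a (b + 1) c x)) := by
    rw [← hasSum_nat_add_iff' 1]
    simpa [h, hypCoeff_zero] using ((hE.add (hV.mul_left a)).mul_left x).congr_fun fun n => by
      linear_combination x ^ (n + 1) * hypCoeff_contiguous_succ (a := a) hb.ne' hc n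
  linear_combination hh.unique hh'

end Contiguous

section KeyInequality

open Real

theorem sinh_mul_lt_mul_sinh {q w : ℝ} (hw : 0 < w) (hq₀ : 0 < q) (hq₁ : q < 1) :
    sinh (q * w) < q * sinh w := by
  let g : ℝ → ℝ := fun x => q * sinh x - sinh (q * x)
  have hg : ∀ x, HasDerivAt g (q * cosh x - q * cosh (q * x)) x := fun x => by
    have h : HasDerivAt (fun x => sinh (q * x)) (cosh (q * x) * q) x := by
      simpa using ((hasDerivAt_id x).const_mul q).sinh
    exact (((hasDerivAt_sinh x).const_mul q).sub h).congr_deriv (by ring)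
  have hmono : StrictMonoOn g (Ici 0) := by
    refine strictMonoOn_of_deriv_pos (convex_Ici 0)
      (fun x _ => (hg x).continuousAt.continuousWithinAt) fun x hx => ?_
    rw [interior_Ici, mem_Ioi] at hx
    rw [(hg x).deriv, ← mul_sub]
    refine mul_pos hq₀ (sub_pos.2 (cosh_lt_cosh.2 ?_))
    rw [abs_of_pos (mul_pos hq₀ hx), abs_of_pos hx]
    nlinarith
  have := hmono self_mem_Ici hw.le hw
  simp only [g, mul_zero, sinh_zero, sub_zero] at this
  linarith

theorem rpow_one_sub_sub_rpow_lt {x p : ℝ} (hx₀ : 0 < x) (hx₁ : x < 1) (hp : 1 / 2 < p)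
    (hp₁ : p < 1) : x ^ (1 - p) - x ^ p < (2 * p - 1) * (1 - x) := by
  obtain ⟨w, hw, rfl⟩ : ∃ w, 0 < w ∧ x = exp (-(2 * w)) :=
    ⟨-log x / 2, by linarith [log_neg hx₀ hx₁], by rw [show -(2 * (-log x / 2)) = log x by ring,
      exp_log hx₀]⟩
  -- in terms of `w` and `q = 2p - 1` the claim is `sinh (q w) < q sinh w`
  have key := sinh_mul_lt_mul_sinh hw (q := 2 * p - 1) (by linarith) (by linarith)
  rw [sinh_eq, sinh_eq] at key
  have e₁ : exp (-(2 * w)) ^ (1 - p) = exp (-w) * exp ((2 * p - 1) * w) := by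
    rw [← exp_mul, ← exp_add]; ring_nf
  have e₂ : exp (-(2 * w)) ^ p = exp (-w) * exp (-((2 * p - 1) * w)) := by
    rw [← exp_mul, ← exp_add]; ring_nf
  have e₃ : exp (-(2 * w)) = exp (-w) * exp (-w) := by rw [← exp_add]; ring_nf
  have e₄ : exp (-w) * exp w = 1 := by rw [← exp_add]; simp
  rw [e₁, e₂, e₃]
  nlinarith [mul_lt_mul_of_pos_left key (exp_pos (-w))]

end KeyInequality

section Comparison

variable {a b : ℝ}

theorem neg_of_deriv_neg_of_nonneg {f : ℝ → ℝ} (hf : ContinuousOn f (Ico a b)) (ha : f a ≤ 0)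
    (hderiv : ∀ x ∈ Ioo a b, 0 ≤ f x → deriv f x < 0) : ∀ x ∈ Ioo a b, f x < 0 := by
  have hle : ∀ t ∈ Ioo a b, f t ≤ 0 := by
    intro t ht
    by_contra! hpos
    -- past the last point `m` of `[a, t]` where `f ≤ 0`, `f` is positive, hence decreasing
    set Z := Icc a t ∩ f ⁻¹' Iic 0
    have hZ : IsClosed Z :=
      (hf.mono (Icc_subset_Ico_right ht.2)).preimage_isClosed_of_isClosed isClosed_Icc isClosed_Iic
    have haZ : a ∈ Z := ⟨left_mem_Icc.2 ht.1.le, ha⟩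
    have hbdd : BddAbove Z := ⟨t, fun x hx => hx.1.2⟩
    set m := sSup Z
    have hmZ : m ∈ Z := hZ.csSup_mem ⟨a, haZ⟩ hbdd
    have ham : a ≤ m := le_csSup hbdd haZ
    have hfm : f m ≤ 0 := hmZ.2
    have hmt : m < t := lt_of_le_of_ne hmZ.1.2 fun h => (not_le.2 hpos) (h ▸ hfm)
    have hpos' : ∀ x ∈ Ioc m t, 0 < f x := fun x hx => by
      by_contra! h
      exact (not_le.2 hx.1) (le_csSup hbdd ⟨⟨ham.trans hx.1.le, hx.2⟩, h⟩)
    have hanti : StrictAntiOn f (Icc m t) :=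
      strictAntiOn_of_deriv_neg (convex_Icc m t) (hf.mono (Icc_subset_Ico ham ht.2)) fun x hx => by
        rw [interior_Icc] at hx
        exact hderiv x ⟨ham.trans_lt hx.1, hx.2.trans ht.2⟩ (hpos' x ⟨hx.1, hx.2.le⟩).le
    have := hanti (left_mem_Icc.2 hmt.le) (right_mem_Icc.2 hmt.le) hmt
    linarith
  intro t ht
  refine (hle t ht).lt_of_ne fun h => ?_
  have hmax : IsLocalMax f t :=
    Filter.mem_of_superset (Ioo_mem_nhds ht.1 ht.2) fun x hx => by
      simpa [h] using hle x hx
  exact (hderiv t ht h.ge).ne hmax.deriv_eq_zero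

variable {y z y' z' : ℝ → ℝ}

theorem lt_of_hasDerivAt_lt_of_le (hy : ContinuousOn y (Ico a b)) (hz : ContinuousOn z (Ico a b))
    (hy' : ∀ x ∈ Ioo a b, HasDerivAt y (y' x) x) (hz' : ∀ x ∈ Ioo a b, HasDerivAt z (z' x) x)
    (ha : y a ≤ z a) (h : ∀ x ∈ Ioo a b, z x ≤ y x → y' x < z' x) :
    ∀ x ∈ Ioo a b, y x < z x := by
  intro x hx
  refine sub_neg.1 (neg_of_deriv_neg_of_nonneg (f := fun x => y x - z x) (hy.sub hz)
    (sub_nonpos.2 ha) (fun s hs hs' => ?_) x hx)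
  have hd : HasDerivAt (fun x => y x - z x) (y' s - z' s) s := (hy' s hs).sub (hz' s hs)
  rw [hd.deriv]
  exact sub_neg.2 (h s hs (sub_nonneg.1 hs'))

theorem eqOn_of_hasDerivAt_mul_sub_nonpos (hy : ContinuousOn y (Ico a b))
    (hz : ContinuousOn z (Ico a b)) (hy' : ∀ x ∈ Ioo a b, HasDerivAt y (y' x) x)
    (hz' : ∀ x ∈ Ioo a b, HasDerivAt z (z' x) x) (ha : y a = z a)
    (h : ∀ x ∈ Ioo a b, (y x - z x) * (y' x - z' x) ≤ 0) : EqOn y z (Ico a b) := by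
  have hD : ∀ x ∈ Ioo a b, HasDerivAt (fun x => (y x - z x) ^ 2)
      (2 * ((y x - z x) * (y' x - z' x))) x := fun x hx =>
    (((hy' x hx).sub (hz' x hx)).pow 2).congr_deriv (by simp; ring)
  have hanti : AntitoneOn (fun x => (y x - z x) ^ 2) (Ico a b) := by
    refine antitoneOn_of_deriv_nonpos (convex_Ico a b) ((hy.sub hz).pow 2) ?_ fun x hx => ?_
    · rw [interior_Ico]
      exact fun x hx => (hD x hx).differentiableAt.differentiableWithinAt
    · rw [interior_Ico] at hx
      rw [(hD x hx).deriv]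
      linarith [h x hx]
  intro x hx
  have := hanti (left_mem_Ico.2 (hx.1.trans_lt hx.2)) hx hx.1
  simp only [ha, sub_self, ne_eq, OfNat.ofNat_ne_zero, not_false_eq_true, zero_pow] at this
  exact sub_eq_zero.1 (pow_eq_zero_iff two_ne_zero |>.1 (le_antisymm this (sq_nonneg _)))

end Comparison

section Riccati

def riccati (α β γ y : ℝ) : ℝ := α - β * y - γ * y ^ 2

variable {α β γ δ w s y z : ℝ}

theorem riccati_sub_riccati :
    riccati α β γ y - riccati α β γ z = -((y - z) * (β + γ * (y + z))) := by
  simp only [riccati]; ring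

theorem riccati_add_left : riccati (α + δ) β γ y = riccati α β γ y + δ := by
  simp only [riccati]; ring

theorem riccati_add_right : riccati α β (γ + δ) y = riccati α β γ y - δ * y ^ 2 := by
  simp only [riccati]; ring

theorem antitoneOn_riccati (hβ : 0 ≤ β) (hγ : 0 ≤ γ) : AntitoneOn (riccati α β γ) (Ici 0) := by
  intro y hy z hz hyz
  rw [← sub_nonpos, riccati_sub_riccati, neg_nonpos]
  exact mul_nonneg (sub_nonneg.2 hyz) (add_nonneg hβ (mul_nonneg hγ (add_nonneg hz hy)))

theorem riccati_mul_sub_nonpos (hβ : 0 ≤ β) (hγ : 0 ≤ γ) (hy : 0 ≤ y) (hz : 0 ≤ z) :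
    (y - z) * (riccati α β γ y - riccati α β γ z) ≤ 0 := by
  rw [riccati_sub_riccati, mul_neg, ← mul_assoc, ← sq, neg_nonpos]
  exact mul_nonneg (sq_nonneg _) (add_nonneg hβ (mul_nonneg hγ (add_nonneg hy hz)))

theorem HasDerivAt.inv_riccati {f : ℝ → ℝ} (hf : HasDerivAt f (riccati α β γ (f s) / w) s)
    (hfs : f s ≠ 0) :
    HasDerivAt (fun x => (f x)⁻¹) (riccati γ (-β) α (f s)⁻¹ / w) s := by
  refine (hf.inv hfs).congr_deriv ?_
  simp only [riccati]
  field_simp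
  ring

end Riccati

section HypFRatio

variable {a b p s : ℝ}

theorem hypF_div_hypF_pos (ha : 0 < a) (hb : 0 < b) (hs : s ∈ Ico 0 1) :
    0 < hypF a b (2 * b + 1) s / hypF a (b + 1) (2 * b + 1) s :=
  div_pos (hypF_pos ha hb (by positivity) hs.1 hs.2)
    (hypF_pos ha (by positivity) (by positivity) hs.1 hs.2)

theorem continuousOn_hypF_div_hypF (ha : 0 < a) (hb : 0 < b) :
    ContinuousOn (fun x => hypF a b (2 * b + 1) x / hypF a (b + 1) (2 * b + 1) x) (Ico 0 1) :=
  fun x hx => by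
    have hx' : |x| < 1 := by rw [abs_of_nonneg hx.1]; exact hx.2
    exact ((hasDerivAt_hypF ha hb (by positivity) hx').continuousAt.div
      (hasDerivAt_hypF ha (by positivity) (by positivity) hx').continuousAt
      (hypF_pos ha (by positivity) (by positivity) hx.1 hx.2).ne').continuousWithinAt

theorem continuousOn_one_sub_rpow (p : ℝ) : ContinuousOn (fun x : ℝ => (1 - x) ^ p) (Ico 0 1) :=
  ContinuousOn.rpow_const (by fun_prop) fun x hx => Or.inl (by linarith [hx.2])

theorem hasDerivAt_hypF_div_hypF (ha : 0 < a) (hb : 0 < b) (hs : s ∈ Ioo 0 1) :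
    HasDerivAt (fun x => hypF a b (2 * b + 1) x / hypF a (b + 1) (2 * b + 1) x)
      (riccati (b * (1 - s)) ((a - b) * s) b (hypF a b (2 * b + 1) s / hypF a (b + 1) (2 * b + 1) s)
        / (s * (1 - s))) s := by
  have hc : 0 < 2 * b + 1 := by positivity
  have hs' : |s| < 1 := by rw [abs_of_pos hs.1]; exact hs.2
  have h₁ := hypF_contiguous ha hb hc hs'
  have h₂ := hypF_contiguous_succ ha hb hc hs'
  have hV := hypF_pos ha (by positivity : 0 < b + 1) hc hs.1.le hs.2
  have h1s : 1 - s ≠ 0 := by linarith [hs.2]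
  have hs0 : s ≠ 0 := hs.1.ne'
  refine ((hasDerivAt_hypF ha hb hc hs').div (hasDerivAt_hypF ha (by positivity) hc hs')
    hV.ne').congr_deriv ?_
  set U := hypF a b (2 * b + 1) s
  set V := hypF a (b + 1) (2 * b + 1) s
  set U' := a * b / (2 * b + 1) * hypF (a + 1) (b + 1) (2 * b + 1 + 1) s
  set V' := a * (b + 1) / (2 * b + 1) * hypF (a + 1) (b + 1 + 1) (2 * b + 1 + 1) s
  have hV0 : V ≠ 0 := hV.ne'
  simp only [riccati]
  field_simp
  linear_combination (1 - s) * V * h₁ - U * h₂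

theorem hasDerivAt_one_sub_rpow_riccati (hap : a = p * (2 * b + 1)) (hs : s ∈ Ioo 0 1) :
    HasDerivAt (fun x => (1 - x) ^ p)
      (riccati
        (b * (1 - s) + b * (1 - s) ^ p * ((2 * p - 1) * s - ((1 - s) ^ (1 - p) - (1 - s) ^ p)))
        ((a - b) * s) b ((1 - s) ^ p) / (s * (1 - s))) s := by
  have hx : 0 < 1 - s := by linarith [hs.2]
  have e₁ : (1 - s) ^ (p - 1) * (1 - s) = (1 - s) ^ p := by
    rw [← Real.rpow_add_one hx.ne', sub_add_cancel]
  have e₂ : (1 - s) ^ p * (1 - s) ^ (1 - p) = 1 - s := by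
    rw [← Real.rpow_add hx, add_sub_cancel, Real.rpow_one]
  have hd : HasDerivAt (fun x => (1 - x) ^ p) (-(p * (1 - s) ^ (p - 1))) s := by
    simpa using ((hasDerivAt_id s).const_sub 1).rpow_const (p := p) (Or.inl hx.ne')
  refine hd.congr_deriv ?_
  rw [eq_div_iff (by nlinarith [hs.1])]
  simp only [riccati]
  linear_combination (-p * s) * e₁ + b * e₂ + (s * (1 - s) ^ p) * hap

theorem hypF_div_hypF_lt_rpow (ha : 0 < a) (hb : 0 < b) (hap : a = p * (2 * b + 1))
    (hp : 1 / 2 < p) (hp₁ : p < 1) :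
    ∀ t ∈ Ioo (0 : ℝ) 1, hypF a b (2 * b + 1) t / hypF a (b + 1) (2 * b + 1) t < (1 - t) ^ p := by
  refine lt_of_hasDerivAt_lt_of_le (continuousOn_hypF_div_hypF ha hb) (continuousOn_one_sub_rpow p)
    (fun s hs => hasDerivAt_hypF_div_hypF ha hb hs)
    (fun s hs => hasDerivAt_one_sub_rpow_riccati hap hs) (by simp [hypF_zero]) fun s hs hle => ?_
  have hab : 0 ≤ a - b := by nlinarith
  have hφ : 0 < (1 - s) ^ p := Real.rpow_pos_of_pos (by linarith [hs.2]) p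
  have hgap :=
    rpow_one_sub_sub_rpow_lt (x := 1 - s) (by linarith [hs.2]) (by linarith [hs.1]) hp hp₁
  rw [sub_sub_cancel] at hgap
  have hmono := antitoneOn_riccati (α := b * (1 - s)) (β := (a - b) * s) (γ := b)
    (mul_nonneg hab hs.1.le) hb.le hφ.le (hypF_div_hypF_pos ha hb (Ioo_subset_Ico_self hs)).le hle
  refine div_lt_div_of_pos_right ?_ (mul_pos hs.1 (sub_pos.2 hs.2))
  rw [riccati_add_left]
  nlinarith [mul_pos (mul_pos hb hφ) (sub_pos.2 hgap)]

theorem rpow_lt_hypF_div_hypF_of_le (ha : 0 < a) (hb : 0 < b) (hap : a = p * (2 * b + 1))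
    (hp : p < 1 / 2) (hba : b ≤ a) :
    ∀ t ∈ Ioo (0 : ℝ) 1, (1 - t) ^ p < hypF a b (2 * b + 1) t / hypF a (b + 1) (2 * b + 1) t := by
  have hp₀ : 0 < p := by nlinarith
  refine lt_of_hasDerivAt_lt_of_le (continuousOn_one_sub_rpow p) (continuousOn_hypF_div_hypF ha hb)
    (fun s hs => hasDerivAt_one_sub_rpow_riccati hap hs)
    (fun s hs => hasDerivAt_hypF_div_hypF ha hb hs) (by simp [hypF_zero]) fun s hs hle => ?_
  have hφ : 0 < (1 - s) ^ p := Real.rpow_pos_of_pos (by linarith [hs.2]) p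
  have hgap := rpow_one_sub_sub_rpow_lt (x := 1 - s) (p := 1 - p) (by linarith [hs.2])
    (by linarith [hs.1]) (by linarith) (by linarith)
  rw [sub_sub_cancel, sub_sub_cancel] at hgap
  have hmono := antitoneOn_riccati (α := b * (1 - s)) (β := (a - b) * s) (γ := b)
    (mul_nonneg (sub_nonneg.2 hba) hs.1.le) hb.le
    (hypF_div_hypF_pos ha hb (Ioo_subset_Ico_self hs)).le hφ.le hle
  refine div_lt_div_of_pos_right ?_ (mul_pos hs.1 (sub_pos.2 hs.2))
  rw [riccati_add_left]
  nlinarith [mul_pos (mul_pos hb hφ) (sub_pos.2 hgap)]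

theorem rpow_lt_hypF_div_hypF_of_lt (ha : 0 < a) (hb : 0 < b) (hap : a = p * (2 * b + 1))
    (hab : a < b) :
    ∀ t ∈ Ioo (0 : ℝ) 1, (1 - t) ^ p < hypF a b (2 * b + 1) t / hypF a (b + 1) (2 * b + 1) t := by
  have hp₀ : 0 < p := by nlinarith
  have hp : p < 1 / 2 := by nlinarith
  have hr := fun s (hs : s ∈ Ico (0 : ℝ) 1) => hypF_div_hypF_pos ha hb hs
  have hφ : ∀ s ∈ Ico (0 : ℝ) 1, 0 < (1 - s) ^ p :=
    fun s hs => Real.rpow_pos_of_pos (by linarith [hs.2]) p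
  -- compare the reciprocals, whose Riccati equation is decreasing in the unknown when `a < b`
  intro t ht
  refine (inv_lt_inv₀ (hr t (Ioo_subset_Ico_self ht)) (hφ t (Ioo_subset_Ico_self ht))).1 ?_
  refine lt_of_hasDerivAt_lt_of_le
    ((continuousOn_hypF_div_hypF ha hb).inv₀ fun s hs => (hr s hs).ne')
    ((continuousOn_one_sub_rpow p).inv₀ fun s hs => (hφ s hs).ne')
    (fun s hs => (hasDerivAt_hypF_div_hypF ha hb hs).inv_riccati
      (hr s (Ioo_subset_Ico_self hs)).ne')
    (fun s hs => (hasDerivAt_one_sub_rpow_riccati hap hs).inv_riccati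
      (hφ s (Ioo_subset_Ico_self hs)).ne')
    (by simp [hypF_zero]) (fun s hs hle => ?_) t ht
  have hs' := Ioo_subset_Ico_self hs
  have hgap := rpow_one_sub_sub_rpow_lt (x := 1 - s) (p := 1 - p) (by linarith [hs.2])
    (by linarith [hs.1]) (by linarith) (by linarith)
  rw [sub_sub_cancel, sub_sub_cancel] at hgap
  have hmono := antitoneOn_riccati (α := b) (β := -((a - b) * s)) (γ := b * (1 - s))
    (by nlinarith [hs.1]) (by nlinarith [hs.2]) (inv_pos.2 (hφ s hs')).le
    (inv_pos.2 (hr s hs')).le hle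
  refine div_lt_div_of_pos_right ?_ (mul_pos hs.1 (sub_pos.2 hs.2))
  rw [riccati_add_right]
  nlinarith [mul_pos (mul_pos (mul_pos hb (hφ s hs')) (sub_pos.2 hgap))
    (pow_pos (inv_pos.2 (hφ s hs')) 2)]

theorem hypF_div_hypF_eq_rpow_half (ha : 0 < a) (hb : 0 < b) (hab : a - b = 1 / 2) :
    ∀ t ∈ Ioo (0 : ℝ) 1,
      hypF a b (2 * b + 1) t / hypF a (b + 1) (2 * b + 1) t = (1 - t) ^ (1 / 2 : ℝ) := by
  have hap : a = 1 / 2 * (2 * b + 1) := by linarith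
  intro t ht
  refine eqOn_of_hasDerivAt_mul_sub_nonpos (continuousOn_hypF_div_hypF ha hb)
    (continuousOn_one_sub_rpow _) (fun s hs => hasDerivAt_hypF_div_hypF ha hb hs)
    (fun s hs => hasDerivAt_one_sub_rpow_riccati hap hs) (by simp [hypF_zero])
    (fun s hs => ?_) (Ioo_subset_Ico_self ht)
  have hgap : (2 * (1 / 2) - 1) * s - ((1 - s) ^ (1 - 1 / 2 : ℝ) - (1 - s) ^ (1 / 2 : ℝ)) = 0 := by
    norm_num
  rw [hgap, mul_zero, add_zero, ← sub_div, mul_div_assoc']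
  exact div_nonpos_of_nonpos_of_nonneg (riccati_mul_sub_nonpos (by nlinarith [hs.1]) hb.le
    (hypF_div_hypF_pos ha hb (Ioo_subset_Ico_self hs)).le
    (Real.rpow_nonneg (by linarith [hs.2]) _)) (mul_pos hs.1 (sub_pos.2 hs.2)).le

end HypFRatio

theorem hypF_rpow_comparison (a b : ℝ) (ha : a ∈ Set.Ioo (0 : ℝ) 1) (hb : 0 < b)
    (p₀ : ℝ) (hp₀ : p₀ = a / (2 * b + 1)) :
    (a - b > 1/2 → ∀ t ∈ Set.Ioo (0 : ℝ) 1,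
      hypF a b (2 * b + 1) t < (1 - t) ^ p₀ * hypF a (b + 1) (2 * b + 1) t) ∧
    (a - b < 1/2 → ∀ t ∈ Set.Ioo (0 : ℝ) 1,
      hypF a b (2 * b + 1) t > (1 - t) ^ p₀ * hypF a (b + 1) (2 * b + 1) t) ∧
    (a - b = 1/2 → ∀ t ∈ Set.Ioo (0 : ℝ) 1,
      hypF a b (2 * b + 1) t = (1 - t) ^ p₀ * hypF a (b + 1) (2 * b + 1) t) := by
  obtain ⟨ha₀, ha₁⟩ := ha
  have hc : 0 < 2 * b + 1 := by positivity
  have hap : a = p₀ * (2 * b + 1) := by rw [hp₀, div_mul_cancel₀ _ hc.ne']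
  have hV : ∀ t ∈ Ioo (0 : ℝ) 1, 0 < hypF a (b + 1) (2 * b + 1) t :=
    fun t ht => hypF_pos ha₀ (by positivity) hc ht.1.le ht.2
  refine ⟨fun hab t ht => ?_, fun hab t ht => ?_, fun hab t ht => ?_⟩
  · have hp : 1 / 2 < p₀ := by nlinarith
    have hp₁ : p₀ < 1 := by nlinarith
    exact (div_lt_iff₀ (hV t ht)).1 (hypF_div_hypF_lt_rpow ha₀ hb hap hp hp₁ t ht)
  · refine (lt_div_iff₀ (hV t ht)).1 ?_
    rcases le_or_gt b a with hba | hab'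
    · exact rpow_lt_hypF_div_hypF_of_le ha₀ hb hap (by nlinarith) hba t ht
    · exact rpow_lt_hypF_div_hypF_of_lt ha₀ hb hap hab' t ht
  · have hp : p₀ = 1 / 2 := by rw [hp₀, div_eq_iff hc.ne']; linarith
    rw [hp, ← div_eq_iff (hV t ht).ne']
    exact hypF_div_hypF_eq_rpow_half ha₀ hb hab t ht
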